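/- arXiv:1906.09780 — 4 statements merged into one kernel-verified Lean document; each statement's English description precedes it below -/
import Mathlib

section
/- Let q be a prime power and v, k, d positive integers with d even and d ≤ 2k ≤ v. Let C be a (v, N, d; k)_q constant dimension code that contains a lifted MRD code of cardinality q^{(v−k)(k−d/2+1)} as a subcode. Then N ≤ q^{(v−k)(k−d/2+1)} + B_q(v, v−k, d; k). -/
/-!
Let `W` be the `(v - k)`-space of vectors vanishing on the first `k` coordinates. A codeword `U`
outside the lifted MRD code meets `W` in dimension at least `d / 2`. Otherwise the projection of
`U` onto the first `k` coordinates has rank at least `m = k - d / 2 + 1`, so `U` contains `m`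
vectors `(y_j | z_j)` with independent heads `y_j`. Distinct `A, B` in the MRD code satisfy
`rank (A - B) ≥ d / 2`, so `A ↦ (y_j A)_j` is injective on it; since the code has exactly
`q ^ ((v - k) m)` elements, some `A` has `y_j A = z_j` for all `j`. The lifted codeword of `A`
then shares an `m`-space with `U`, at distance at most `2 (d / 2 - 1) < d`. Hence the codewords
outside the lifted code form a code counted by `B_q(v, v - k, d; k)`.
-/

/-- The subspace distance between two subspaces:
`d_s(U,W) = dim(U+W) - dim(U∩W)`. -/
noncomputable def subspaceDist {F V : Type*} [Field F] [AddCommGroup V] [Module F V]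
    (U W : Submodule F V) : ℕ :=
  Module.finrank F ↥(U ⊔ W) - Module.finrank F ↥(U ⊓ W)

/-- `C` is a constant dimension code of `k`-spaces in `F^v` with minimum
subspace distance at least `d`. -/
def IsCDCode (F : Type*) [Field F] (v k d : ℕ)
    (C : Finset (Submodule F (Fin v → F))) : Prop :=
  (∀ U ∈ C, Module.finrank F ↥U = k) ∧
  (∀ U ∈ C, ∀ U' ∈ C, U ≠ U' → d ≤ subspaceDist U U')

/-- `A_q(v,d;k)`: the maximum cardinality of a constant dimension code of
`k`-spaces in `F^v` with minimum subspace distance at least `d`. -/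
noncomputable def Aq (F : Type*) [Field F] (v d k : ℕ) : ℕ :=
  sSup {n | ∃ C : Finset (Submodule F (Fin v → F)), C.card = n ∧ IsCDCode F v k d C}

/-- `B_q(v1,v2,d;k)`: the maximum cardinality of a constant dimension code of
`k`-spaces in `F^{v1}` with minimum subspace distance at least `d` such that some
`v2`-space `W` intersects every codeword in dimension at least `d/2`. -/
noncomputable def Bq (F : Type*) [Field F] (v1 v2 d k : ℕ) : ℕ :=
  sSup {n | ∃ (C : Finset (Submodule F (Fin v1 → F))) (W : Submodule F (Fin v1 → F)),
    C.card = n ∧ IsCDCode F v1 k d C ∧ Module.finrank F ↥W = v2 ∧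
    (∀ U ∈ C, d / 2 ≤ Module.finrank F ↥(U ⊓ W))}

/-- The Gaussian binomial coefficient `[a choose b]_q`. -/
noncomputable def gaussBinom (q : ℚ) (a b : ℕ) : ℚ :=
  ∏ i ∈ Finset.range b, (q ^ (a - b + i + 1) - 1) / (q ^ (i + 1) - 1)

/-- The row space of the matrix `(I_k | A)`, viewed as a subspace of `F^v`. -/
noncomputable def rowSpanAug (F : Type*) [Field F] (k v : ℕ) (h : k ≤ v)
    (A : Matrix (Fin k) (Fin (v - k)) F) : Submodule F (Fin v → F) :=
  Submodule.span F (Set.range fun i : Fin k =>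
    Fin.append ((1 : Matrix (Fin k) (Fin k) F) i) (A i) ∘ Fin.cast (Nat.add_sub_cancel' h).symm)

open Module Matrix

section LinearAlgebra

variable {F : Type*} [Field F]

theorem LinearIndependent.card_add_rank_le_of_forall_vecMul_eq_zero {ι m n : Type*} [Fintype ι]
    [Fintype m] [Fintype n] {y : ι → m → F} (hy : LinearIndependent F y) {D : Matrix m n F}
    (hyD : ∀ j, y j ᵥ* D = 0) : Fintype.card ι + D.rank ≤ Fintype.card m := by
  have hrank : D.rank = finrank F (LinearMap.range D.vecMulLinear) := by
    rw [rank_eq_finrank_span_row, range_vecMulLinear]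
  have hy' : LinearIndependent F (fun j => (⟨y j, hyD j⟩ : LinearMap.ker D.vecMulLinear)) :=
    .of_comp (LinearMap.ker D.vecMulLinear).subtype hy
  have hker := hy'.fintype_card_le_finrank
  have := D.vecMulLinear.finrank_range_add_finrank_ker
  rw [finrank_fintype_fun_eq_card] at this
  omega

theorem exists_linearIndependent_comp_of_add_finrank_inf_ker_le {V V' : Type*} [AddCommGroup V]
    [Module F V] [AddCommGroup V'] [Module F V'] (f : V →ₗ[F] V') (U : Submodule F V)
    [FiniteDimensional F U] {m : ℕ} (hm : m + finrank F ↥(U ⊓ LinearMap.ker f) ≤ finrank F U) :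
    ∃ u : Fin m → V, (∀ j, u j ∈ U) ∧ LinearIndependent F (f ∘ u) := by
  have hker : finrank F (LinearMap.ker (f.domRestrict U)) = finrank F ↥(U ⊓ LinearMap.ker f) := by
    rw [LinearMap.ker_domRestrict, ← Submodule.finrank_map_subtype_eq, Submodule.map_comap_subtype]
  have hrange : m ≤ finrank F (LinearMap.range (f.domRestrict U)) := by
    have := (f.domRestrict U).finrank_range_add_finrank_ker
    omega
  obtain ⟨y, hy⟩ := exists_linearIndependent_of_le_finrank hrange
  choose u hu using fun j => (y j).2
  refine ⟨fun j => u j, fun j => (u j).2, ?_⟩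
  have hfu : f ∘ (fun j => (u j : V)) = (LinearMap.range (f.domRestrict U)).subtype ∘ y :=
    funext hu
  rw [hfu]
  exact hy.map' _ (Submodule.ker_subtype _)

theorem subspaceDist_add_two_mul_finrank_inf {V : Type*} [AddCommGroup V] [Module F V]
    {U X : Submodule F V} [FiniteDimensional F U] [FiniteDimensional F X] {k : ℕ}
    (hU : finrank F U = k) (hX : finrank F X = k) :
    subspaceDist U X + 2 * finrank F ↥(U ⊓ X) = 2 * k := by
  have hsum := Submodule.finrank_sup_add_finrank_inf_eq U X
  have hle := Submodule.finrank_mono (inf_le_left.trans le_sup_left : U ⊓ X ≤ U ⊔ X)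
  unfold subspaceDist
  omega

theorem exists_mem_forall_vecMul_eq [Fintype F] {ι κ n : Type*} [Fintype ι] [Fintype κ]
    [Fintype n] {M : Finset (Matrix κ n F)} {δ : ℕ}
    (hM : ∀ A ∈ M, ∀ B ∈ M, A ≠ B → δ ≤ (A - B).rank)
    (hcard : M.card = Fintype.card F ^ (Fintype.card ι * Fintype.card n))
    {y : ι → κ → F} (hy : LinearIndependent F y) (hδ : Fintype.card κ < Fintype.card ι + δ)
    (z : ι → n → F) : ∃ A ∈ M, ∀ j, y j ᵥ* A = z j := by
  classical
  let f : M → ι → n → F := fun A j => y j ᵥ* A.1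
  have hinj : Function.Injective f := by
    rintro ⟨A, hA⟩ ⟨B, hB⟩ hAB
    by_contra hne
    have := hy.card_add_rank_le_of_forall_vecMul_eq_zero (D := A - B) fun j => by
      rw [vecMul_sub, sub_eq_zero]; exact congrFun hAB j
    have := hM A hA B hB (fun h => hne (Subtype.ext h))
    omega
  have hcard' : Fintype.card M = Fintype.card (ι → n → F) := by
    simp [hcard, pow_mul, pow_right_comm]
  obtain ⟨⟨A, hA⟩, hAz⟩ :=
    ((Fintype.bijective_iff_injective_and_card f).mpr ⟨hinj, hcard'⟩).surjective z
  exact ⟨A, hA, congrFun hAz⟩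

end LinearAlgebra

section AugmentedEmbedding

variable {F : Type*} [Field F] {k v : ℕ} (h : k ≤ v)

def headProj : (Fin v → F) →ₗ[F] (Fin k → F) :=
  LinearMap.funLeft F F (Fin.cast (Nat.add_sub_cancel' h) ∘ Fin.castAdd (v - k))

def tailProj : (Fin v → F) →ₗ[F] (Fin (v - k) → F) :=
  LinearMap.funLeft F F (Fin.cast (Nat.add_sub_cancel' h) ∘ Fin.natAdd k)

def augMap (A : Matrix (Fin k) (Fin (v - k)) F) : (Fin k → F) →ₗ[F] (Fin v → F) where
  toFun y := Fin.append y (y ᵥ* A) ∘ Fin.cast (Nat.add_sub_cancel' h).symm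
  map_add' y z := by
    ext p
    obtain ⟨q, rfl⟩ := (finCongr (Nat.add_sub_cancel' h)).surjective p
    cases q using Fin.addCases <;> simp [add_vecMul]
  map_smul' c y := by
    ext p
    obtain ⟨q, rfl⟩ := (finCongr (Nat.add_sub_cancel' h)).surjective p
    cases q using Fin.addCases <;> simp [smul_vecMul]

theorem eq_of_headProj_eq_of_tailProj_eq {x x' : Fin v → F} (hhead : headProj h x = headProj h x')
    (htail : tailProj h x = tailProj h x') : x = x' := by
  ext p
  obtain ⟨q, rfl⟩ := (finCongr (Nat.add_sub_cancel' h)).surjective p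
  cases q using Fin.addCases with
  | left j => exact congrFun hhead j
  | right i => exact congrFun htail i

@[simp]
theorem headProj_augMap (A : Matrix (Fin k) (Fin (v - k)) F) (y : Fin k → F) :
    headProj h (augMap h A y) = y := by
  ext j; simp [headProj, augMap]

@[simp]
theorem tailProj_augMap (A : Matrix (Fin k) (Fin (v - k)) F) (y : Fin k → F) :
    tailProj h (augMap h A y) = y ᵥ* A := by
  ext i; simp [tailProj, augMap]

theorem augMap_injective (A : Matrix (Fin k) (Fin (v - k)) F) :
    Function.Injective (augMap h A) :=
  Function.LeftInverse.injective (headProj_augMap h A)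

theorem rowSpanAug_eq_range (A : Matrix (Fin k) (Fin (v - k)) F) :
    rowSpanAug F k v h A = LinearMap.range (augMap h A) := by
  have hrows : (fun i : Fin k => Fin.append ((1 : Matrix (Fin k) (Fin k) F) i) (A i) ∘
      Fin.cast (Nat.add_sub_cancel' h).symm) = augMap h A ∘ Pi.basisFun F (Fin k) := by
    ext i p
    have hone : (1 : Matrix (Fin k) (Fin k) F) i = Pi.single i 1 := funext fun _ => one_eq_pi_single
    simp [augMap, hone, Matrix.row]
  rw [rowSpanAug, hrows, Set.range_comp, ← Submodule.map_span, Basis.span_eq, Submodule.map_top]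

theorem finrank_rowSpanAug (A : Matrix (Fin k) (Fin (v - k)) F) :
    finrank F (rowSpanAug F k v h A) = k := by
  rw [rowSpanAug_eq_range, LinearMap.finrank_range_of_inj (augMap_injective h A), finrank_fin_fun]

theorem finrank_ker_headProj : finrank F (LinearMap.ker (headProj (F := F) h)) = v - k := by
  have hsurj : Function.Surjective (headProj (F := F) h) :=
    LinearMap.funLeft_surjective_of_injective F F _
      ((Fin.cast_injective _).comp (Fin.castAdd_injective _ _))
  have := LinearMap.finrank_range_add_finrank_ker (headProj (F := F) h)
  rw [LinearMap.range_eq_top.mpr hsurj, finrank_top, finrank_fin_fun, finrank_fin_fun] at this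
  omega

end AugmentedEmbedding

theorem IsCDCode.mono {F : Type*} [Field F] {v k d : ℕ} {C C' : Finset (Submodule F (Fin v → F))}
    (hC : IsCDCode F v k d C) (hC' : C' ⊆ C) : IsCDCode F v k d C' :=
  ⟨fun U hU => hC.1 U (hC' hU), fun U hU U' hU' => hC.2 U (hC' hU) U' (hC' hU')⟩

theorem card_le_Bq {F : Type*} [Field F] [Finite F] {v1 v2 d k : ℕ}
    {C : Finset (Submodule F (Fin v1 → F))} {W : Submodule F (Fin v1 → F)}
    (hC : IsCDCode F v1 k d C) (hW : finrank F W = v2)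
    (hCW : ∀ U ∈ C, d / 2 ≤ finrank F ↥(U ⊓ W)) : C.card ≤ Bq F v1 v2 d k := by
  have : Finite (Submodule F (Fin v1 → F)) := Finite.of_injective _ SetLike.coe_injective
  have := Fintype.ofFinite (Submodule F (Fin v1 → F))
  refine le_csSup ⟨Fintype.card (Submodule F (Fin v1 → F)), ?_⟩ ⟨C, W, rfl, hC, hW, hCW⟩
  rintro _ ⟨C', -, rfl, -⟩
  exact C'.card_le_univ

theorem le_finrank_inf_ker_headProj {F : Type*} [Field F] [Fintype F] {v k d : ℕ} (h : k ≤ v)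
    {C : Finset (Submodule F (Fin v → F))} {M : Finset (Matrix (Fin k) (Fin (v - k)) F)}
    (hC : IsCDCode F v k d C) (hdk : d / 2 ≤ k)
    (hMcard : M.card = Fintype.card F ^ ((v - k) * (k - d / 2 + 1)))
    (hMrank : ∀ A ∈ M, ∀ B ∈ M, A ≠ B → d / 2 ≤ (A - B).rank)
    (hMC : ∀ A ∈ M, rowSpanAug F k v h A ∈ C) {U : Submodule F (Fin v → F)} (hU : U ∈ C)
    (hUM : ∀ A ∈ M, rowSpanAug F k v h A ≠ U) :
    d / 2 ≤ finrank F ↥(U ⊓ LinearMap.ker (headProj h)) := by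
  by_contra! hlt
  set m := k - d / 2 + 1
  obtain ⟨u, huU, hu⟩ := exists_linearIndependent_comp_of_add_finrank_inf_ker_le (headProj h) U
    (m := m) (by rw [hC.1 U hU]; omega)
  obtain ⟨A, hAM, hA⟩ := exists_mem_forall_vecMul_eq hMrank (by simpa [mul_comm] using hMcard) hu
    (by simp only [Fintype.card_fin]; omega) (fun j => tailProj h (u j))
  have huX : ∀ j, u j ∈ U ⊓ rowSpanAug F k v h A := fun j => ⟨huU j, by
    rw [rowSpanAug_eq_range]
    refine ⟨headProj h (u j), eq_of_headProj_eq_of_tailProj_eq h (by simp) ?_⟩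
    rw [tailProj_augMap]
    exact hA j⟩
  have hinf : m ≤ finrank F ↥(U ⊓ rowSpanAug F k v h A) := by
    have hu' : LinearIndependent F (fun j => (⟨u j, huX j⟩ : ↥(U ⊓ rowSpanAug F k v h A))) :=
      .of_comp ((headProj h).comp (U ⊓ rowSpanAug F k v h A).subtype) hu
    simpa using hu'.fintype_card_le_finrank
  have hdist := hC.2 U hU _ (hMC A hAM) (hUM A hAM).symm
  have := subspaceDist_add_two_mul_finrank_inf (hC.1 U hU) (finrank_rowSpanAug h A)
  omega

/-- Proposition 8 of the paper. A `(v,N,d;k)_q` code containing a lifted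
MRD code of cardinality `q^{(v-k)(k-d/2+1)}` satisfies
`N ≤ q^{(v-k)(k-d/2+1)} + B_q(v, v-k, d; k)`. -/
theorem stmt_3 (q : ℕ) (F : Type) [Field F] [Fintype F] (hq : Fintype.card F = q)
    (v k d : ℕ) (hdk : d ≤ 2 * k) (hkv : 2 * k ≤ v)
    (C : Finset (Submodule F (Fin v → F))) (hC : IsCDCode F v k d C)
    (M : Finset (Matrix (Fin k) (Fin (v - k)) F))
    (hMcard : M.card = q ^ ((v - k) * (k - d / 2 + 1)))
    (hMrank : ∀ A ∈ M, ∀ B ∈ M, A ≠ B → d / 2 ≤ (A - B).rank)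
    (hMC : ∀ A ∈ M, rowSpanAug F k v (by omega) A ∈ C) :
    C.card ≤ q ^ ((v - k) * (k - d / 2 + 1)) + Bq F v (v - k) d k := by
  subst hq
  have h : k ≤ v := by omega
  classical
  set L := M.image (rowSpanAug F k v h)
  have hLC : L ⊆ C := by
    simpa only [L, Finset.image_subset_iff] using hMC
  have hrest : (C \ L).card ≤ Bq F v (v - k) d k := by
    refine card_le_Bq (hC.mono Finset.sdiff_subset) (finrank_ker_headProj h) fun U hU => ?_
    obtain ⟨hUC, hUL⟩ := Finset.mem_sdiff.mp hU
    exact le_finrank_inf_ker_headProj h hC (by omega) hMcard hMrank hMC hUC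
      fun A hA hAU => hUL (Finset.mem_image.mpr ⟨A, hA, hAU⟩)
  calc C.card = (C \ L).card + L.card := (Finset.card_sdiff_add_card_eq_card hLC).symm
    _ ≤ Bq F v (v - k) d k + M.card := add_le_add hrest Finset.card_image_le
    _ = _ := by rw [hMcard, add_comm]
end

section
/- Let q be a prime power and let v1, v2, k, d be integers with d even, 2 ≤ d ≤ 2k, v1 ≥ k, and d/2 ≤ v2 ≤ v1. If k < d and v1 ≥ v2 · k, then B_q(v1, v2, d; k) = A_q(v2, 2d − 2k; d/2). -/
/-! Upper bound: if `W` meets every codeword `U` in dimension at least `j = d/2`, choose a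
`j`-subspace of `U ⊓ W` for each `U`. Two of them meet in at most `dim (U ⊓ U') ≤ k - j`
dimensions, which is `< j` because `k < d`, so they are distinct and form a code of `j`-spaces of
`W ≅ F^{v2}` with distance at least `2j - 2(k - j) = 2d - 2k`.

Lower bound: conversely, lift each codeword `V` of such a code, placed in `W ≅ F^{v2}`, to
`V ⊕ E V` with `E V` a `(k - j)`-space in a complement of `W`, where distinct `V` give `E V` that
meet trivially. Such a partial spread, indexed by all `j`-subspaces of `F^{v2}`, fits into a
complement of dimension `v1 - v2 ≥ v2 (k - 1)`: distinct lines of an `L`-vector space, with `L / F`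
of degree `k - j`, are `(k - j)`-dimensional over `F` and meet trivially. -/

open Module Submodule Function

section LinearAlgebra

variable {F M N : Type*} [Field F] [AddCommGroup M] [Module F M] [AddCommGroup N] [Module F N]

lemma exists_injective_linearMap_of_finrank_le [FiniteDimensional F M] [FiniteDimensional F N]
    (h : finrank F M ≤ finrank F N) : ∃ f : M →ₗ[F] N, Injective f := by
  obtain ⟨v, hv⟩ := exists_linearIndependent_of_le_finrank h
  exact ⟨(finBasis F M).constr F v, (finBasis F M).injective_constr_of_linearIndependent hv⟩

lemma Submodule.exists_le_finrank_eq [FiniteDimensional F M] (S : Submodule F M) {r : ℕ}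
    (h : r ≤ finrank F S) : ∃ X ≤ S, finrank F X = r := by
  obtain ⟨v, hv⟩ := exists_linearIndependent_of_le_finrank h
  refine ⟨span F (Set.range (S.subtype ∘ v)), ?_, ?_⟩
  · exact span_le.mpr (Set.range_subset_iff.mpr fun i => (v i).2)
  · rw [finrank_span_eq_card (hv.map' S.subtype S.ker_subtype), Fintype.card_fin]

lemma Submodule.exists_injective_range_eq [FiniteDimensional F M] {n : ℕ} (W : Submodule F M)
    (hW : finrank F W = n) : ∃ ι : (Fin n → F) →ₗ[F] M, Injective ι ∧ LinearMap.range ι = W := by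
  obtain ⟨g⟩ := FiniteDimensional.nonempty_linearEquiv_of_finrank_eq
    (show finrank F (Fin n → F) = finrank F W by simp [hW])
  refine ⟨W.subtype ∘ₗ g.toLinearMap, W.injective_subtype.comp g.injective, ?_⟩
  rw [LinearMap.range_comp, LinearEquiv.range, Submodule.map_top, range_subtype]

lemma LinearMap.finrank_map_of_injective {f : M →ₗ[F] N} (hf : Injective f) (P : Submodule F M) :
    finrank F (P.map f) = finrank F P :=
  (Submodule.equivMapOfInjective f hf P).finrank_eq.symm

lemma LinearMap.finrank_comap_of_injective [FiniteDimensional F N] {f : M →ₗ[F] N}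
    (hf : Injective f) (Q : Submodule F N) :
    finrank F (Q.comap f) = finrank F (LinearMap.range f ⊓ Q : Submodule F N) := by
  rw [← map_comap_eq, finrank_map_of_injective hf]

lemma sup_inf_sup_of_disjoint {W C A A' B B' : Submodule F M} (hWC : Disjoint W C)
    (hA : A ≤ W) (hA' : A' ≤ W) (hB : B ≤ C) (hB' : B' ≤ C) :
    (A ⊔ B) ⊓ (A' ⊔ B') = A ⊓ A' ⊔ B ⊓ B' := by
  refine le_antisymm (fun x hx => ?_) (sup_le (inf_le_inf le_sup_left le_sup_left)
    (inf_le_inf le_sup_right le_sup_right))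
  obtain ⟨⟨a, ha, b, hb, rfl⟩, ⟨a', ha', b', hb', hab⟩⟩ := And.imp mem_sup.mp mem_sup.mp hx
  have hdiff : a - a' = b' - b := by rw [sub_eq_sub_iff_add_eq_add, ← hab, add_comm]
  have ha'a : a' = a := (sub_eq_zero.mp <| (disjoint_def.mp hWC) _ (sub_mem (hA ha) (hA' ha'))
    (hdiff ▸ sub_mem (hB' hb') (hB hb))).symm
  have hb'b : b' = b := by rw [ha'a] at hdiff; exact (sub_eq_zero.mp (sub_self a ▸ hdiff).symm)
  exact mem_sup.mpr ⟨a, ⟨ha, ha'a ▸ ha'⟩, b, ⟨hb, hb'b ▸ hb'⟩, rfl⟩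

lemma Submodule.disjoint_span_singleton_of_ne {K V : Type*} [DivisionRing K] [AddCommGroup V]
    [Module K V] {x y : V} (h : (K ∙ x) ≠ (K ∙ y)) : Disjoint (K ∙ x) (K ∙ y) := by
  refine disjoint_span_singleton.mpr fun hy => ?_
  by_contra hy0
  obtain ⟨a, rfl⟩ := mem_span_singleton.mp hy
  exact h (span_singleton_smul_eq (IsUnit.mk0 a (left_ne_zero_of_smul hy0)) x).symm

lemma Submodule.finrank_restrictScalars_span_singleton (L : Type*) [Field L] [Algebra F L]
    {N : Type*} [AddCommGroup N] [Module L N] [Module F N] [IsScalarTower F L N] {x : N}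
    (hx : x ≠ 0) : finrank F ((L ∙ x).restrictScalars F) = finrank F L :=
  (((LinearEquiv.toSpanNonzeroSingleton L N x hx).trans
    (restrictScalarsEquiv F L N (L ∙ x)).symm).restrictScalars F).finrank_eq.symm

end LinearAlgebra

section BasisFamily

variable {F M : Type*} [Field F] [AddCommGroup M] [Module F M] [FiniteDimensional F M]

noncomputable def Submodule.basisFamily (j : ℕ) (V : Submodule F M) : Fin j → M :=
  if h : finrank F V = j then V.subtype ∘ finBasisOfFinrankEq F V h else 0

lemma Submodule.span_range_basisFamily {j : ℕ} {V : Submodule F M} (h : finrank F V = j) :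
    span F (Set.range (V.basisFamily j)) = V := by
  rw [basisFamily, dif_pos h, Set.range_comp, ← map_span,
    (finBasisOfFinrankEq F V h).span_eq, map_top, range_subtype]

lemma Submodule.basisFamily_ne_zero {j : ℕ} (hj : 0 < j) {V : Submodule F M}
    (h : finrank F V = j) : V.basisFamily j ≠ 0 := fun h0 =>
  (finBasisOfFinrankEq F V h).ne_zero ⟨0, hj⟩ <| Subtype.ext <| by
    simpa [basisFamily, dif_pos h] using congrFun h0 ⟨0, hj⟩

lemma Submodule.injOn_basisFamily (j : ℕ) :
    Set.InjOn (fun V : Submodule F M => V.basisFamily j) {V | finrank F V = j} :=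
  fun V hV V' hV' h => by
    rw [← span_range_basisFamily hV, ← span_range_basisFamily hV']
    exact congrArg (fun b => span F (Set.range b)) h

lemma Submodule.injOn_span_singleton_basisFamily (j : ℕ) :
    Set.InjOn (fun V : Submodule F M => F ∙ V.basisFamily j) {V | finrank F V = j} :=
  fun V hV V' hV' h => by
    obtain ⟨z, hz⟩ := span_singleton_eq_span_singleton.mp h
    rw [← span_range_basisFamily hV, ← span_range_basisFamily hV', ← hz,
      show z • V.basisFamily j = fun i => z • V.basisFamily j i from rfl, Set.range_smul]
    exact (span_smul_eq_of_isUnit _ _ z.isUnit).symm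

end BasisFamily

section Codes

variable {F : Type*} [Field F] {v k m : ℕ}

lemma subspaceDist_eq {M : Type*} [AddCommGroup M] [Module F M] [FiniteDimensional F M]
    (U U' : Submodule F M) :
    subspaceDist U U' = finrank F U + finrank F U' - 2 * finrank F ↥(U ⊓ U') := by
  have hsum := Submodule.finrank_sup_add_finrank_inf_eq U U'
  have hle := Submodule.finrank_mono (inf_le_left.trans le_sup_left : U ⊓ U' ≤ U ⊔ U')
  unfold subspaceDist
  omega

lemma IsCDCode.finrank_inf_add_le {C : Finset (Submodule F (Fin v → F))}
    (hC : IsCDCode F v k (2 * m) C) {U U' : Submodule F (Fin v → F)} (hU : U ∈ C) (hU' : U' ∈ C)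
    (hne : U ≠ U') : finrank F ↥(U ⊓ U') + m ≤ k := by
  have hdist := hC.2 U hU U' hU' hne
  have hle := Submodule.finrank_mono (inf_le_left : U ⊓ U' ≤ U)
  rw [subspaceDist_eq, hC.1 U hU, hC.1 U' hU'] at hdist
  rw [hC.1 U hU] at hle
  omega

lemma isCDCode_image {α : Type*} [DecidableEq (Submodule F (Fin v → F))] (C : Finset α)
    (Y : α → Submodule F (Fin v → F)) (hm : 0 < m) (hY : ∀ a ∈ C, finrank F (Y a) = k)
    (hYY : ∀ a ∈ C, ∀ b ∈ C, a ≠ b → finrank F ↥(Y a ⊓ Y b) + m ≤ k) :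
    (C.image Y).card = C.card ∧ IsCDCode F v k (2 * m) (C.image Y) := by
  have hinj : Set.InjOn Y C := fun a ha b hb hab => by
    by_contra hne
    have := hYY a ha b hb hne
    rw [hab, inf_idem, hY b hb] at this
    omega
  refine ⟨Finset.card_image_of_injOn hinj, Finset.forall_mem_image.mpr hY, ?_⟩
  simp only [Finset.forall_mem_image]
  intro a ha b hb hne
  have := hYY a ha b hb (fun h => hne (congrArg Y h))
  rw [subspaceDist_eq, hY a ha, hY b hb]
  omega

end Codes

lemma exists_disjoint_family_of_injOn_span_singleton {F : Type*} [Field F] (L : Type*) [Field L]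
    [Algebra F L] {N M : Type*} [AddCommGroup N] [Module L N] [Module F N] [IsScalarTower F L N]
    [FiniteDimensional F N] [AddCommGroup M] [Module F M] [FiniteDimensional F M]
    (hNM : finrank F N ≤ finrank F M) {ι : Type*} {s : Set ι} (x : ι → N)
    (hx : ∀ i ∈ s, x i ≠ 0) (hinj : s.InjOn fun i => L ∙ x i) :
    ∃ E : ι → Submodule F M,
      (∀ i ∈ s, finrank F (E i) = finrank F L) ∧ s.Pairwise (Disjoint on E) := by
  obtain ⟨g, hg⟩ := exists_injective_linearMap_of_finrank_le hNM
  refine ⟨fun i => ((L ∙ x i).restrictScalars F).map g, fun i hi => ?_,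
    fun i hi i' hi' hne => ?_⟩
  · rw [LinearMap.finrank_map_of_injective hg,
      finrank_restrictScalars_span_singleton L (hx i hi)]
  · exact disjoint_map hg <| (disjoint_restrictScalars_iff F).mpr <|
      disjoint_span_singleton_of_ne fun h => hne (hinj hi hi' h)

lemma exists_partial_spread {F M : Type*} [Field F] [Finite F] [AddCommGroup M] [Module F M]
    [FiniteDimensional F M] {n j e : ℕ} (hej : e < j) (hjn : j ≤ n)
    (hdim : n * (j + e) ≤ finrank F M + n) :
    ∃ E : Submodule F (Fin n → F) → Submodule F M,
      (∀ V : Submodule F (Fin n → F), finrank F V = j → finrank F (E V) = e) ∧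
      {V : Submodule F (Fin n → F) | finrank F V = j}.Pairwise (Disjoint on E) := by
  have hmat : finrank F (Fin j → Fin n → F) = j * n := by
    simp only [finrank_pi_fintype, finrank_self, Finset.sum_const, Finset.card_univ,
      Fintype.card_fin, smul_eq_mul, mul_one]
  rcases Nat.lt_trichotomy e 1 with he | rfl | he
  · exact ⟨fun _ => ⊥, fun _ _ => by rw [finrank_bot]; omega, fun _ _ _ _ _ => disjoint_bot_left⟩
  · have hNM : finrank F (Fin j → Fin n → F) ≤ finrank F M := by rw [hmat]; nlinarith
    obtain ⟨E, hE, hdisj⟩ := exists_disjoint_family_of_injOn_span_singleton F hNM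
      (fun V : Submodule F (Fin n → F) => V.basisFamily j)
      (fun V hV => basisFamily_ne_zero (by omega) hV) (injOn_span_singleton_basisFamily j)
    exact ⟨E, fun V hV => (hE V hV).trans (finrank_self F), hdisj⟩
  · -- `L`-lines through `(1, y)` with `L / F` of degree `e`; distinct `y` give distinct lines
    have : Fact (ringChar F).Prime := ⟨CharP.char_is_prime F _⟩
    have : NeZero e := ⟨by omega⟩
    let L := FiniteField.Extension F (ringChar F) e
    have hL : finrank F L = e := FiniteField.finrank_extension F (ringChar F) e
    obtain ⟨t, hjt, htM⟩ : ∃ t, n * j ≤ e * t ∧ e + e * t ≤ finrank F M := by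
      obtain ⟨m, rfl⟩ : ∃ m, e = m + 2 := ⟨e - 2, by omega⟩
      obtain ⟨t, r, hdiv, hr⟩ : ∃ t r, (m + 2) * t + r = n * j + m + 1 ∧ r < m + 2 :=
        ⟨_, _, Nat.div_add_mod _ _, Nat.mod_lt _ (by omega)⟩
      have hroom := Nat.mul_le_mul_right (m + 1) (show m + 3 ≤ n by omega)
      refine ⟨t, ?_, ?_⟩ <;> nlinarith
    have hfin : finrank F (Fin t → L) = e * t := by
      rw [finrank_pi_fintype]; simp [hL, mul_comm]
    have hpack : finrank F (Fin j → Fin n → F) ≤ finrank F (Fin t → L) := by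
      rw [hmat, hfin]; nlinarith
    obtain ⟨pack, hpack⟩ := exists_injective_linearMap_of_finrank_le hpack
    have hNM : finrank F (L × (Fin t → L)) ≤ finrank F M := by
      rw [finrank_prod, hL, hfin]; exact htM
    obtain ⟨E, hE, hdisj⟩ := exists_disjoint_family_of_injOn_span_singleton L hNM
      (fun V : Submodule F (Fin n → F) => ((1 : L), pack (V.basisFamily j)))
      (fun V _ => by simp) (fun V hV V' hV' h => by
        obtain ⟨z, hz⟩ := span_singleton_eq_span_singleton.mp h
        have hz1 : (z : L) = 1 := by simpa [Units.smul_def] using congrArg Prod.fst hz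
        refine injOn_basisFamily j hV hV' (hpack ?_)
        simpa [Units.smul_def, hz1] using congrArg Prod.snd hz)
    exact ⟨E, fun V hV => (hE V hV).trans hL, hdisj⟩

lemma exists_cdCode_of_bqCode {F : Type*} [Field F] {v1 v2 j e : ℕ} (hej : e < j)
    (C : Finset (Submodule F (Fin v1 → F))) (W : Submodule F (Fin v1 → F))
    (hC : IsCDCode F v1 (j + e) (2 * j) C) (hW : finrank F W = v2)
    (hCW : ∀ U ∈ C, j ≤ finrank F ↥(U ⊓ W)) :
    ∃ C' : Finset (Submodule F (Fin v2 → F)), C'.card = C.card ∧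
      IsCDCode F v2 j (2 * (j - e)) C' := by
  classical
  obtain ⟨ι, hι, rfl⟩ := W.exists_injective_range_eq hW
  have hY : ∀ U ∈ C, ∃ Y ≤ U.comap ι, finrank F Y = j := fun U hU =>
    (U.comap ι).exists_le_finrank_eq <| by
      rw [LinearMap.finrank_comap_of_injective hι, inf_comm]; exact hCW U hU
  choose! Y hYle hYrank using hY
  refine ⟨C.image Y, isCDCode_image C Y (by omega) hYrank fun U hU U' hU' hne => ?_⟩
  have hle : finrank F ↥(Y U ⊓ Y U') ≤ finrank F ↥(U ⊓ U') := calc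
    _ ≤ finrank F ((U ⊓ U').comap ι) := Submodule.finrank_mono <| by
      rw [comap_inf]; exact inf_le_inf (hYle U hU) (hYle U' hU')
    _ ≤ _ := by
      rw [LinearMap.finrank_comap_of_injective hι]; exact Submodule.finrank_mono inf_le_right
  have := hC.finrank_inf_add_le hU hU' hne
  omega

lemma exists_bqCode_of_cdCode {F : Type*} [Field F] [Finite F] {v1 v2 j e : ℕ} (hej : e < j)
    (hjv2 : j ≤ v2) (hv2 : v2 ≤ v1) (hdim : v2 * (j + e) ≤ v1)
    (D : Finset (Submodule F (Fin v2 → F))) (hD : IsCDCode F v2 j (2 * (j - e)) D) :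
    ∃ (C : Finset (Submodule F (Fin v1 → F))) (W : Submodule F (Fin v1 → F)),
      C.card = D.card ∧ IsCDCode F v1 (j + e) (2 * j) C ∧ finrank F W = v2 ∧
      ∀ U ∈ C, j ≤ finrank F ↥(U ⊓ W) := by
  classical
  obtain ⟨ι, hι⟩ := exists_injective_linearMap_of_finrank_le
    (F := F) (M := Fin v2 → F) (N := Fin v1 → F) (by simpa using hv2)
  have hW : finrank F (LinearMap.range ι) = v2 := by
    rw [LinearMap.finrank_range_of_inj hι, finrank_fin_fun]
  obtain ⟨K, hK⟩ := (LinearMap.range ι).exists_isCompl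
  have hKrank : finrank F K = v1 - v2 := by
    have := Submodule.finrank_add_eq_of_isCompl hK
    rw [hW, finrank_fin_fun] at this
    omega
  obtain ⟨E, hE, hdisj⟩ := exists_partial_spread (M := K) hej hjv2
    (by rw [hKrank, Nat.sub_add_cancel hv2]; exact hdim)
  let U (V : Submodule F (Fin v2 → F)) := V.map ι ⊔ (E V).map K.subtype
  have hEK (V) : (E V).map K.subtype ≤ K := map_subtype_le K (E V)
  have hUW (V) : U V ⊓ LinearMap.range ι = V.map ι := by
    rw [sup_inf_assoc_of_le _ LinearMap.map_le_range, inf_comm,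
      (hK.disjoint.mono_right (hEK V)).eq_bot, sup_bot_eq]
  have hUrank (V : Submodule F (Fin v2 → F)) (hV : finrank F V = j) : finrank F (U V) = j + e := by
    have := Submodule.finrank_sup_add_finrank_inf_eq (V.map ι) ((E V).map K.subtype)
    rw [(hK.disjoint.mono LinearMap.map_le_range (hEK V)).eq_bot, finrank_bot,
      LinearMap.finrank_map_of_injective hι, LinearMap.finrank_map_of_injective
      K.injective_subtype, hE V hV, hV] at this
    omega
  have hUU : ∀ V ∈ D, ∀ V' ∈ D, V ≠ V' → finrank F ↥(U V ⊓ U V') + j ≤ j + e := by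
    intro V hV V' hV' hne
    have hinf : U V ⊓ U V' = (V ⊓ V').map ι := by
      rw [sup_inf_sup_of_disjoint hK.disjoint LinearMap.map_le_range LinearMap.map_le_range
          (hEK V) (hEK V'),
        (disjoint_map K.injective_subtype (hdisj (hD.1 V hV) (hD.1 V' hV') hne)).eq_bot,
        sup_bot_eq, map_inf _ hι]
    have := hD.finrank_inf_add_le hV hV' hne
    rw [hinf, LinearMap.finrank_map_of_injective hι]
    omega
  obtain ⟨hcard, hC⟩ := isCDCode_image D U (by omega) (fun V hV => hUrank V (hD.1 V hV)) hUU
  refine ⟨D.image U, LinearMap.range ι, hcard, hC, hW, Finset.forall_mem_image.mpr ?_⟩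
  intro V hV
  rw [hUW, LinearMap.finrank_map_of_injective hι, hD.1 V hV]

theorem stmt_5_general (F : Type) [Field F] [Fintype F]
    (v1 v2 k d : ℕ) (hdeven : 2 ∣ d) (hdk : d ≤ 2 * k)
    (hv2l : d / 2 ≤ v2) (hv2u : v2 ≤ v1)
    (hkd : k < d) (hbig : v2 * k ≤ v1) :
    Bq F v1 v2 d k = Aq F v2 (2 * d - 2 * k) (d / 2) := by
  obtain ⟨j, rfl⟩ := hdeven
  obtain ⟨e, rfl⟩ : ∃ e, k = j + e := ⟨k - j, by omega⟩
  unfold Bq Aq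
  rw [show 2 * j / 2 = j by omega, show 2 * (2 * j) - 2 * (j + e) = 2 * (j - e) by omega]
  congr 1
  ext n
  constructor
  · rintro ⟨C, W, rfl, hC, hW, hCW⟩
    exact exists_cdCode_of_bqCode (by omega) C W hC hW hCW
  · rintro ⟨D, rfl, hD⟩
    exact exists_bqCode_of_cdCode (by omega) (by omega) hv2u hbig D hD

/-- Proposition 10 of the paper. For non-trivial parameters with `k < d`
and `v1 ≥ v2 * k` we have `B_q(v1,v2,d;k) = A_q(v2, 2d-2k; d/2)`. -/
theorem stmt_5 (q : ℕ) (F : Type) [Field F] [Fintype F] (hq : Fintype.card F = q)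
    (v1 v2 k d : ℕ) (hdeven : 2 ∣ d) (hd2 : 2 ≤ d) (hdk : d ≤ 2 * k)
    (hkv1 : k ≤ v1) (hv2l : d / 2 ≤ v2) (hv2u : v2 ≤ v1)
    (hkd : k < d) (hbig : v2 * k ≤ v1) :
    Bq F v1 v2 d k = Aq F v2 (2 * d - 2 * k) (d / 2) :=
  stmt_5_general F v1 v2 k d hdeven hdk hv2l hv2u hkd hbig
end

section
/- For every prime power q, B_q(16, 5, 6; 5) ≥ q^6 + q^5 + 2q^4 + 2q^3 + 2q^2 + q + 1 (the Gaussian binomial coefficient [5 choose 2]_q). -/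
/-!
Every 3-space `T` of `F⁵` is paired with its own member `S_T` of a partial spread of `q⁸`
pairwise trivially intersecting planes in `F² × F⁹`: the graphs of `(a, b) ↦ (a + b X) u` for the
polynomials `u` of degree `< 8`. This is possible because there are `[5 choose 3]_q ≤ q⁸`
such `T`. The codewords `T × S_T` of `F⁵ × F¹¹ ≅ F¹⁶` are 5-dimensional, meet
`W = F⁵ × 0` in `T`, and two of them meet in `(T ∩ T') × 0`, of dimension at most 2, so their
subspace distance is at least `10 - 4 = 6`.
-/

open Module Submodule

section SubspaceDist

variable {F V : Type*} [Field F] [AddCommGroup V] [Module F V]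

theorem subspaceDist_self (U : Submodule F V) : subspaceDist U U = 0 := by
  rw [subspaceDist, sup_idem, inf_idem, Nat.sub_self]

theorem subspaceDist_map_linearEquiv {V' : Type*} [AddCommGroup V'] [Module F V']
    (e : V ≃ₗ[F] V') (U U' : Submodule F V) :
    subspaceDist (U.map (e : V →ₗ[F] V')) (U'.map (e : V →ₗ[F] V')) = subspaceDist U U' := by
  rw [subspaceDist, subspaceDist, ← Submodule.map_sup, ← Submodule.map_inf _ e.injective,
    LinearEquiv.finrank_map_eq, LinearEquiv.finrank_map_eq]

theorem le_subspaceDist [FiniteDimensional F V] {U U' : Submodule F V} {k m : ℕ}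
    (hU : finrank F U = k) (hU' : finrank F U' = k) (h : finrank F ↥(U ⊓ U') ≤ m) :
    2 * (k - m) ≤ subspaceDist U U' := by
  have := Submodule.finrank_sup_add_finrank_inf_eq U U'
  unfold subspaceDist
  omega

end SubspaceDist

theorem Submodule.finrank_inf_lt_of_ne {K V : Type*} [DivisionRing K] [AddCommGroup V] [Module K V]
    [FiniteDimensional K V] {T T' : Submodule K V} {k : ℕ} (hT : finrank K T = k)
    (hT' : finrank K T' = k) (hne : T ≠ T') : finrank K ↥(T ⊓ T') < k := by
  by_contra! h
  exact hne <| (Submodule.eq_of_le_of_finrank_le inf_le_left (by omega)).symm.trans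
    (Submodule.eq_of_le_of_finrank_le inf_le_right (by omega))

theorem card_le_Bq_s10 {F : Type*} [Field F] [Finite F] {ι V : Type*} [Finite ι] [AddCommGroup V]
    [Module F V] [FiniteDimensional F V] {v1 v2 d k : ℕ} (hV : finrank F V = v1) (hd : 0 < d)
    (U : ι → Submodule F V) (W : Submodule F V) (hU : ∀ i, finrank F (U i) = k)
    (hW : finrank F W = v2) (hUU : Pairwise fun i j => d ≤ subspaceDist (U i) (U j))
    (hUW : ∀ i, d / 2 ≤ finrank F ↥(U i ⊓ W)) : Nat.card ι ≤ Bq F v1 v2 d k := by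
  classical
  have := Fintype.ofFinite ι
  have := Fintype.ofFinite (Submodule F (Fin v1 → F))
  let e : V ≃ₗ[F] (Fin v1 → F) := LinearEquiv.ofFinrankEq _ _ (by simp [hV])
  let f i := (U i).map (e : V →ₗ[F] (Fin v1 → F))
  have hf : Function.Injective f := fun i j hij => by
    by_contra hne
    have h : d ≤ subspaceDist (f i) (f j) := (subspaceDist_map_linearEquiv e _ _).symm ▸ hUU hne
    rw [hij, subspaceDist_self] at h
    omega
  refine le_csSup ⟨Fintype.card (Submodule F (Fin v1 → F)), ?_⟩
    ⟨Finset.univ.image f, W.map (e : V →ₗ[F] (Fin v1 → F)), ?_, ⟨?_, ?_⟩, ?_, ?_⟩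
  · rintro n ⟨C, -, rfl, -⟩
    exact C.card_le_univ
  · rw [Finset.card_image_of_injective _ hf, Finset.card_univ, Nat.card_eq_fintype_card]
  · simp only [Finset.mem_image, Finset.mem_univ, true_and, forall_exists_index]
    rintro _ i rfl
    rw [LinearEquiv.finrank_map_eq, hU]
  · simp only [Finset.mem_image, Finset.mem_univ, true_and, forall_exists_index]
    rintro _ i rfl _ j rfl hne
    rw [subspaceDist_map_linearEquiv]
    exact hUU fun h => hne (congrArg f h)
  · rw [LinearEquiv.finrank_map_eq, hW]
  · simp only [Finset.mem_image, Finset.mem_univ, true_and, forall_exists_index]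
    rintro _ i rfl
    rw [← Submodule.map_inf _ e.injective, LinearEquiv.finrank_map_eq]
    exact hUW i

section Product

variable {F M N : Type*} [Field F] [AddCommGroup M] [AddCommGroup N] [Module F M] [Module F N]

theorem Submodule.finrank_prod [FiniteDimensional F M] [FiniteDimensional F N]
    (p : Submodule F M) (q : Submodule F N) :
    finrank F ↥(p.prod q) = finrank F p + finrank F q := by
  rw [← p.range_subtype, ← q.range_subtype, ← LinearMap.range_prodMap,
    LinearMap.finrank_range_of_inj
      (Prod.map_injective.2 ⟨p.injective_subtype, q.injective_subtype⟩),
    Module.finrank_prod, p.range_subtype, q.range_subtype]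

theorem Submodule.finrank_prod_inf_prod_of_inf_eq_bot [FiniteDimensional F M]
    [FiniteDimensional F N] (T T' : Submodule F M) {S S' : Submodule F N} (hS : S ⊓ S' = ⊥) :
    finrank F ↥(T.prod S ⊓ T'.prod S') = finrank F ↥(T ⊓ T') := by
  rw [Submodule.prod_inf_prod, hS, Submodule.finrank_prod, finrank_bot, add_zero]

theorem LinearMap.finrank_graph [FiniteDimensional F M] (f : M →ₗ[F] N) :
    finrank F f.graph = finrank F M := by
  rw [LinearMap.graph_eq_range_prod]
  exact LinearMap.finrank_range_of_inj fun x y h => congrArg Prod.fst h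

theorem LinearMap.graph_inf_graph_eq_bot {f g : M →ₗ[F] N}
    (h : Function.Injective (f - g)) : f.graph ⊓ g.graph = ⊥ := by
  refine eq_bot_iff.2 fun x hx => ?_
  obtain ⟨hf, hg⟩ := Submodule.mem_inf.1 hx
  rw [LinearMap.mem_graph_iff] at hf hg
  have hx1 : x.1 = 0 := h <| by simp [← hf, ← hg]
  exact (Submodule.mem_bot F).2 (Prod.ext hx1 (by simp [hf, hx1]))

end Product

section ShiftSpread

variable {F : Type*} [Field F] {n : ℕ}

theorem linearIndependent_snoc_zero_cons_zero {u : Fin n → F} (hu : u ≠ 0) :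
    LinearIndependent F ![(Fin.snoc u 0 : Fin (n + 1) → F), Fin.cons 0 u] := by
  rw [LinearIndependent.pair_iff]
  induction n with
  | zero => exact absurd (Subsingleton.elim u 0) hu
  | succ n ih =>
    intro a b hab
    obtain ⟨x, v, rfl⟩ : ∃ x v, u = Fin.cons x v := ⟨u 0, Fin.tail u, (Fin.cons_self_tail u).symm⟩
    rw [← Fin.cons_snoc_eq_snoc_cons] at hab
    have h0 : a * x = 0 := by simpa using congrFun hab 0
    have hsucc (i : Fin (n + 1)) :
        a * (Fin.snoc v 0 : Fin (n + 1) → F) i + b * (Fin.cons x v : Fin (n + 1) → F) i = 0 := by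
      simpa using congrFun hab i.succ
    rcases eq_or_ne x 0 with rfl | hx
    · have hv : v ≠ 0 := fun h => hu (by rw [h]; exact Matrix.cons_zero_zero)
      exact ih hv a b (funext fun i => by simpa using hsucc i)
    · have ha : a = 0 := (mul_eq_zero.1 h0).resolve_right hx
      refine ⟨ha, (mul_eq_zero.1 ?_).resolve_right hx⟩
      simpa [ha] using hsucc 0

/-- On coefficient vectors, multiplication of the polynomial `u` by `a + b X`. -/
noncomputable def shiftPairMap (u : Fin n → F) : F × F →ₗ[F] (Fin (n + 1) → F) :=
  (LinearMap.toSpanSingleton F _ (Fin.snoc u 0)).coprod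
    (LinearMap.toSpanSingleton F _ (Fin.cons 0 u))

theorem shiftPairMap_apply (u : Fin n → F) (p : F × F) :
    shiftPairMap u p = p.1 • (Fin.snoc u 0 : Fin (n + 1) → F) + p.2 • Fin.cons 0 u :=
  rfl

theorem shiftPairMap_sub (u w : Fin n → F) :
    shiftPairMap (u - w) = shiftPairMap u - shiftPairMap w := by
  have hsnoc : (Fin.snoc (u - w) 0 : Fin (n + 1) → F) = Fin.snoc u 0 - Fin.snoc w 0 := by
    ext i; induction i using Fin.lastCases <;> simp
  have hcons : (Fin.cons 0 (u - w) : Fin (n + 1) → F) = Fin.cons 0 u - Fin.cons 0 w := by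
    ext i; induction i using Fin.cases <;> simp
  ext p <;> simp [shiftPairMap_apply, hsnoc, hcons]

theorem injective_shiftPairMap {u : Fin n → F} (hu : u ≠ 0) :
    Function.Injective (shiftPairMap u) := by
  refine (injective_iff_map_eq_zero _).2 fun p hp => ?_
  have h := linearIndependent_snoc_zero_cons_zero hu
  rw [LinearIndependent.pair_iff] at h
  rw [shiftPairMap_apply] at hp
  obtain ⟨ha, hb⟩ := h p.1 p.2 hp
  exact Prod.ext ha hb

noncomputable def shiftSpread (u : Fin n → F) : Submodule F ((F × F) × (Fin (n + 1) → F)) :=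
  (shiftPairMap u).graph

theorem finrank_shiftSpread (u : Fin n → F) : finrank F (shiftSpread u) = 2 := by
  rw [shiftSpread, LinearMap.finrank_graph, Module.finrank_prod, Module.finrank_self]

theorem shiftSpread_inf_eq_bot {u w : Fin n → F} (huw : u ≠ w) :
    shiftSpread u ⊓ shiftSpread w = ⊥ :=
  LinearMap.graph_inf_graph_eq_bot <| by
    rw [← shiftPairMap_sub]; exact injective_shiftPairMap (sub_ne_zero.2 huw)

end ShiftSpread

section Grassmannian

variable {K V : Type*} [Field K] [AddCommGroup V] [Module K V]

def independentTupleOfSubspace {k : ℕ}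
    (z : Σ W : {W : Submodule K V // finrank K W = k}, {s : Fin k → W.1 // LinearIndependent K s}) :
    {s : Fin k → V // LinearIndependent K s} :=
  ⟨z.1.1.subtype ∘ z.2.1, z.2.2.map' _ z.1.1.ker_subtype⟩

theorem span_independentTupleOfSubspace [Finite V] {k : ℕ}
    (z : Σ W : {W : Submodule K V // finrank K W = k}, {s : Fin k → W.1 // LinearIndependent K s}) :
    span K (Set.range (independentTupleOfSubspace z).1) = z.1.1 := by
  refine Submodule.eq_of_le_of_finrank_le (span_le.2 ?_) ?_
  · rintro _ ⟨i, rfl⟩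
    exact (z.2.1 i).2
  · rw [finrank_span_eq_card (independentTupleOfSubspace z).2, Fintype.card_fin, z.1.2]

theorem bijective_independentTupleOfSubspace [Finite V] {k : ℕ} :
    Function.Bijective (independentTupleOfSubspace (K := K) (V := V) (k := k)) := by
  constructor
  · rintro ⟨W, s⟩ ⟨W', s'⟩ h
    obtain rfl : W = W' := Subtype.ext <| by
      rw [← span_independentTupleOfSubspace ⟨W, s⟩, ← span_independentTupleOfSubspace ⟨W', s'⟩, h]
    obtain rfl : s = s' :=
      Subtype.ext <| funext fun i => Subtype.ext (congrFun (congrArg Subtype.val h) i)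
    rfl
  · intro s
    refine ⟨⟨⟨span K (Set.range s.1), by rw [finrank_span_eq_card s.2, Fintype.card_fin]⟩,
      fun i => ⟨s.1 i, subset_span (Set.mem_range_self i)⟩, ?_⟩, rfl⟩
    exact LinearIndependent.of_comp (span K (Set.range s.1)).subtype s.2

theorem card_subspaces_mul_prod [Fintype K] [Finite V] {k : ℕ} (hk : k ≤ finrank K V) :
    Nat.card {W : Submodule K V // finrank K W = k} *
        ∏ i : Fin k, (Fintype.card K ^ k - Fintype.card K ^ i.val) =
      ∏ i : Fin k, (Fintype.card K ^ finrank K V - Fintype.card K ^ i.val) := by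
  have := Fintype.ofFinite {W : Submodule K V // finrank K W = k}
  rw [← card_linearIndependent hk,
    ← Nat.card_eq_of_bijective _ bijective_independentTupleOfSubspace, Nat.card_sigma,
    Finset.sum_congr rfl fun W _ => by rw [card_linearIndependent W.2.ge, W.2],
    Finset.sum_const, Finset.card_univ, smul_eq_mul, Nat.card_eq_fintype_card]

end Grassmannian

theorem card_subspaces_three_fin_five (F : Type*) [Field F] [Fintype F] :
    Nat.card {T : Submodule F (Fin 5 → F) // finrank F T = 3} =
      Fintype.card F ^ 6 + Fintype.card F ^ 5 + 2 * Fintype.card F ^ 4 +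
        2 * Fintype.card F ^ 3 + 2 * Fintype.card F ^ 2 + Fintype.card F + 1 := by
  have h := card_subspaces_mul_prod (K := F) (V := Fin 5 → F) (k := 3) (by simp)
  set q := Fintype.card F
  have hq : 2 ≤ q := Fintype.one_lt_card
  simp only [finrank_fin_fun, Fin.prod_univ_three, Fin.val_zero, Fin.val_one, Fin.val_two,
    pow_zero, pow_one] at h
  have h1 : q ^ 2 < q ^ 3 := Nat.pow_lt_pow_right hq (by norm_num)
  have h2 : q < q ^ 2 := by simpa using Nat.pow_lt_pow_right hq (show 1 < 2 by norm_num)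
  have h3 : q ^ 3 < q ^ 5 := Nat.pow_lt_pow_right hq (by norm_num)
  refine Nat.eq_of_mul_eq_mul_right (Nat.mul_pos (Nat.mul_pos ?_ ?_) ?_) (h.trans ?_)
  · omega
  · omega
  · omega
  · zify [h1.le, h2.le, h3.le, (h2.trans h1).le, (h2.trans (h1.trans h3)).le,
      (h1.trans h3).le, Nat.one_le_pow 3 q (by omega), Nat.one_le_pow 5 q (by omega)]
    ring

theorem card_subspaces_le_Bq {F : Type*} [Field F] [Fintype F] {n m t : ℕ} (ht : 3 ≤ t)
    (hcard : Nat.card {T : Submodule F (Fin n → F) // finrank F T = t} ≤ Fintype.card F ^ m) :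
    Nat.card {T : Submodule F (Fin n → F) // finrank F T = t} ≤ Bq F (n + m + 3) n 6 (t + 2) := by
  have := Fintype.ofFinite {T : Submodule F (Fin n → F) // finrank F T = t}
  obtain ⟨σ⟩ := Function.Embedding.nonempty_of_card_le
    (α := {T : Submodule F (Fin n → F) // finrank F T = t}) (β := Fin m → F)
    (by rwa [Fintype.card_fun, Fintype.card_fin, ← Nat.card_eq_fintype_card])
  have hU (T : {T : Submodule F (Fin n → F) // finrank F T = t}) :
      finrank F ↥(T.1.prod (shiftSpread (σ T))) = t + 2 := by
    rw [Submodule.finrank_prod, T.2, finrank_shiftSpread]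
  refine card_le_Bq_s10 (V := (Fin n → F) × ((F × F) × (Fin (m + 1) → F))) (by simp; omega)
    (by norm_num) (fun T => T.1.prod (shiftSpread (σ T))) ((⊤ : Submodule F (Fin n → F)).prod ⊥)
    hU ?_ (fun T T' hTT' => ?_) (fun T => ?_)
  · rw [Submodule.finrank_prod, finrank_top, finrank_bot, finrank_fin_fun, add_zero]
  · have hT : finrank F ↥(T.1 ⊓ T'.1) < t :=
      Submodule.finrank_inf_lt_of_ne T.2 T'.2 fun h => hTT' (Subtype.ext h)
    have := le_subspaceDist (m := t - 1) (hU T) (hU T') <| by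
      rw [finrank_prod_inf_prod_of_inf_eq_bot _ _ (shiftSpread_inf_eq_bot (σ.injective.ne hTT'))]
      omega
    omega
  · rw [finrank_prod_inf_prod_of_inf_eq_bot _ _ (inf_bot_eq _), inf_top_eq, T.2]
    omega

theorem qBinom_five_two_le_pow_eight {q : ℕ} (hq : 2 ≤ q) :
    q ^ 6 + q ^ 5 + 2 * q ^ 4 + 2 * q ^ 3 + 2 * q ^ 2 + q + 1 ≤ q ^ 8 := by
  obtain ⟨r, rfl⟩ := Nat.exists_eq_add_of_le' hq
  ring_nf
  nlinarith [Nat.zero_le r, pow_nonneg (Nat.zero_le r) 2, pow_nonneg (Nat.zero_le r) 3,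
    pow_nonneg (Nat.zero_le r) 4, pow_nonneg (Nat.zero_le r) 5, pow_nonneg (Nat.zero_le r) 6,
    pow_nonneg (Nat.zero_le r) 7, pow_nonneg (Nat.zero_le r) 8]

/-- `B_q(16,5,6;5) ≥ q^6+q^5+2q^4+2q^3+2q^2+q+1 = [5 choose 2]_q`. -/
theorem stmt_10 (q : ℕ) (F : Type) [Field F] [Fintype F] (hq : Fintype.card F = q) :
    q ^ 6 + q ^ 5 + 2 * q ^ 4 + 2 * q ^ 3 + 2 * q ^ 2 + q + 1 ≤ Bq F 16 5 6 5 := by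
  subst hq
  rw [← card_subspaces_three_fin_five F]
  refine card_subspaces_le_Bq (m := 8) le_rfl ?_
  rw [card_subspaces_three_fin_five F]
  exact qBinom_five_two_le_pow_eight Fintype.one_lt_card
end

section
/- Let q be a prime power. Suppose that for all integers k, v1, v2 with k ≥ 3 and v1 ≥ v2 + 2 ≥ k + 1 it holds that B_q(v1, v2, 2k−2; k) = A_q(v2, 2k−4; k−1). Then for all integers v, m, k with k ≥ 3 and k ≤ m ≤ v − k, A_q(v, 2k−2; k) ≥ A_q(m, 2k−2; k) · q^{2(v−m)} + A_q(v−m, 2k−4; k−1). -/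
/-!
Split `F^v` as `W ⊕ F^m`, where `W` is the `(v-m)`-space attached to the optimal code `C₂`
provided by the conjectured value of `B_q`, and identify `W` with `K = 𝔽_{q^(v-m)}`. Every codeword
`U` of an optimal code in `F^m` is lifted to the `q^(2(v-m))` graphs `{u + a θu + b (θu)^q}` over
`U`, where `θ : U ↪ K` and `a, b ∈ K`. Two lifts of the same `U` meet in the kernel of a nonzero
`q`-linearized polynomial of degree at most `q`, hence in dimension at most one; lifts of different
codewords meet in a space projecting injectively into `U ∩ U'`. A lift meets `W` trivially while
the codewords of `C₂` meet `W` in dimension `k - 1`, so a lift and a codeword of `C₂` meet in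
dimension at most one as well.
-/

open Module Polynomial

section Linearized

variable (F : Type*) {K : Type*} [Field F] [Fintype F] [Field K] [Algebra F K]

noncomputable def linearizedMap (a b : K) : K →ₗ[F] K :=
  LinearMap.mulLeft F a + LinearMap.mulLeft F b ∘ₗ (FiniteField.frobeniusAlgHom F K).toLinearMap

variable {F}

lemma linearizedMap_apply (a b x : K) :
    linearizedMap F a b x = a * x + b * x ^ Fintype.card F := rfl

lemma linearizedMap_sub (a b a' b' : K) :
    linearizedMap F a b - linearizedMap F a' b' = linearizedMap F (a - a') (b - b') := by
  ext x
  simp only [LinearMap.sub_apply, linearizedMap_apply]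
  ring

lemma finrank_ker_linearizedMap_le_one [FiniteDimensional F K] {a b : K} (hab : a ≠ 0 ∨ b ≠ 0) :
    finrank F (LinearMap.ker (linearizedMap F a b)) ≤ 1 := by
  classical
  set q := Fintype.card F
  have hq : 1 < q := Fintype.one_lt_card
  set P : K[X] := C a * X + C b * X ^ q
  have hP : P ≠ 0 := by
    have hcoeff_one : P.coeff 1 = a := by simp [P, hq.ne]
    have hcoeff_q : P.coeff q = b := by simp [P, coeff_X, hq.ne]
    rintro h
    rw [h, coeff_zero] at hcoeff_one hcoeff_q
    tauto
  have hdeg : P.natDegree ≤ q := by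
    refine (natDegree_add_le _ _).trans (max_le ?_ ?_)
    · exact (natDegree_C_mul_le _ _).trans (by rw [natDegree_X]; omega)
    · exact (natDegree_C_mul_le _ _).trans (natDegree_X_pow_le _)
  have hroots : (LinearMap.ker (linearizedMap F a b) : Set K) ⊆ (P.roots.toFinset : Set K) := by
    intro x hx
    simpa [mem_roots hP, P, linearizedMap_apply] using hx
  have hcard : q ^ finrank F (LinearMap.ker (linearizedMap F a b)) ≤ q ^ 1 :=
    calc q ^ finrank F (LinearMap.ker (linearizedMap F a b))
        = (LinearMap.ker (linearizedMap F a b) : Set K).ncard := by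
          rw [← Nat.card_coe_set_eq, SetLike.coe_sort_coe, Module.natCard_eq_pow_finrank (K := F),
            Nat.card_eq_fintype_card]
      _ ≤ P.roots.toFinset.card := by
          rw [← Set.ncard_coe_finset]
          exact Set.ncard_le_ncard hroots (Finset.finite_toSet _)
      _ ≤ q ^ 1 := by
          rw [pow_one]
          exact (Multiset.toFinset_card_le _).trans ((card_roots' P).trans hdeg)
  exact (Nat.pow_le_pow_iff_right hq).mp hcard

end Linearized

section Subspaces

variable {F V E : Type*} [Field F] [AddCommGroup V] [Module F V] [AddCommGroup E] [Module F E]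

lemma finrank_inf_add_finrank_inf_le [FiniteDimensional F V] {L U W : Submodule F V}
    (hLW : Disjoint L W) : finrank F ↥(L ⊓ U) + finrank F ↥(U ⊓ W) ≤ finrank F U := by
  have hdisj : (L ⊓ U) ⊓ (U ⊓ W) = ⊥ :=
    eq_bot_iff.mpr fun _ ⟨⟨hxL, _⟩, _, hxW⟩ => hLW.le_bot ⟨hxL, hxW⟩
  have := Submodule.finrank_sup_add_finrank_inf_eq (L ⊓ U) (U ⊓ W)
  rw [hdisj, finrank_bot, add_zero] at this
  exact this ▸ Submodule.finrank_mono (sup_le inf_le_right inf_le_left)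

lemma finrank_inf_le_finrank_map_inf [FiniteDimensional F V] (π : V →ₗ[F] E) {L : Submodule F V}
    (hL : Disjoint L (LinearMap.ker π)) (L' : Submodule F V) :
    finrank F ↥(L ⊓ L') ≤ finrank F ↥(L.map π ⊓ L'.map π) := by
  have hinj : Function.Injective (π.domRestrict (L ⊓ L')) :=
    LinearMap.injective_domRestrict_iff.mpr (hL.mono_left inf_le_left)
  rw [← LinearMap.finrank_range_of_inj hinj, LinearMap.range_domRestrict]
  exact Submodule.finrank_mono (Submodule.map_inf_le π)

lemma finrank_comap_le_of_injective [FiniteDimensional F E] {θ : V →ₗ[F] E}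
    (hθ : Function.Injective θ) (S : Submodule F E) : finrank F (S.comap θ) ≤ finrank F S :=
  (Submodule.equivMapOfInjective θ hθ (S.comap θ)).finrank_eq ▸
    Submodule.finrank_mono (Submodule.map_comap_le θ S)

lemma exists_surjective_ker_eq [FiniteDimensional F V] [FiniteDimensional F E] (W : Submodule F V)
    (h : finrank F W + finrank F E = finrank F V) :
    ∃ π : V →ₗ[F] E, Function.Surjective π ∧ LinearMap.ker π = W := by
  let e : (V ⧸ W) ≃ₗ[F] E := LinearEquiv.ofFinrankEq _ _ (by rw [W.finrank_quotient]; omega)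
  exact ⟨e ∘ₗ W.mkQ, e.surjective.comp W.mkQ_surjective, by
    rw [LinearEquiv.ker_comp, Submodule.ker_mkQ]⟩

end Subspaces

section Lifts

variable {F V E : Type*} [Field F] [AddCommGroup V] [Module F V] [AddCommGroup E] [Module F E]
  {π : V →ₗ[F] E}

section Sections

variable {U : Submodule F E} {σ σ' : U →ₗ[F] V}

lemma injective_of_comp_eq_subtype (h : π ∘ₗ σ = U.subtype) : Function.Injective σ :=
  .of_comp (f := π) (by rw [← LinearMap.coe_comp, h]; exact U.injective_subtype)

lemma map_range_of_comp_eq_subtype (h : π ∘ₗ σ = U.subtype) : (LinearMap.range σ).map π = U := by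
  rw [← LinearMap.range_comp, h, Submodule.range_subtype]

lemma disjoint_range_ker_of_comp_eq_subtype (h : π ∘ₗ σ = U.subtype) :
    Disjoint (LinearMap.range σ) (LinearMap.ker π) := by
  rw [disjoint_iff_inf_le]
  rintro _ ⟨⟨u, rfl⟩, hu⟩
  have : u = 0 := Subtype.ext <| by simpa [← LinearMap.comp_apply, h] using hu
  simp [this]

lemma finrank_range_of_comp_eq_subtype (h : π ∘ₗ σ = U.subtype) :
    finrank F (LinearMap.range σ) = finrank F U :=
  LinearMap.finrank_range_of_inj (injective_of_comp_eq_subtype h)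

lemma finrank_range_inf_range_le [FiniteDimensional F E] (h : π ∘ₗ σ = U.subtype)
    (h' : π ∘ₗ σ' = U.subtype) :
    finrank F ↥(LinearMap.range σ ⊓ LinearMap.range σ') ≤ finrank F (LinearMap.ker (σ - σ')) := by
  refine le_trans (Submodule.finrank_mono ?_) (Submodule.finrank_map_le σ _)
  rintro _ ⟨⟨u, rfl⟩, u', hu'⟩
  have : u' = u := Subtype.ext <| by
    simpa [← LinearMap.comp_apply, h, h'] using congrArg π hu'
  exact ⟨u, by simp [← hu', this], rfl⟩

end Sections

theorem exists_sections_finrank_ker_sub_le_one [Fintype F] [FiniteDimensional F V]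
    [FiniteDimensional F E] (K : Type*) [Field K] [Algebra F K] [FiniteDimensional F K]
    (hπ : Function.Surjective π) (hK : finrank F K ≤ finrank F (LinearMap.ker π)) :
    ∃ σ : (U : Submodule F E) → K × K → (U →ₗ[F] V), (∀ U x, π ∘ₗ σ U x = U.subtype) ∧
      ∀ U : Submodule F E, finrank F U ≤ finrank F K → ∀ x y, x ≠ y →
        finrank F (LinearMap.ker (σ U x - σ U y)) ≤ 1 := by
  obtain ⟨α, hα⟩ := π.exists_rightInverse_of_surjective (LinearMap.range_eq_top.mpr hπ)
  obtain ⟨β, hβ⟩ := finrank_le_iff_exists_linearMap.mp hK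
  have hθ (U : Submodule F E) :
      ∃ θ : U →ₗ[F] K, finrank F U ≤ finrank F K → Function.Injective θ := by
    by_cases hU : finrank F U ≤ finrank F K
    · exact (finrank_le_iff_exists_linearMap.mp hU).imp fun _ hθ _ => hθ
    · exact ⟨0, fun h => absurd h hU⟩
  choose θ hθ using hθ
  let ι := (LinearMap.ker π).subtype ∘ₗ β
  have hι : LinearMap.ker ι = ⊥ :=
    LinearMap.ker_eq_bot.mpr ((LinearMap.ker π).injective_subtype.comp hβ)
  refine ⟨fun U x => α ∘ₗ U.subtype + ι ∘ₗ linearizedMap F x.1 x.2 ∘ₗ θ U, ?_, ?_⟩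
  · intro U x
    ext u
    simp [ι, ← LinearMap.comp_apply π α, hα]
  · intro U hU x y hxy
    rw [add_sub_add_left_eq_sub, ← LinearMap.comp_sub, ← LinearMap.sub_comp, linearizedMap_sub,
      LinearMap.ker_comp_of_ker_eq_bot _ hι, LinearMap.ker_comp]
    refine (finrank_comap_le_of_injective (hθ U hU) _).trans
      (finrank_ker_linearizedMap_le_one ?_)
    contrapose! hxy
    exact Prod.ext (sub_eq_zero.mp hxy.1) (sub_eq_zero.mp hxy.2)

theorem exists_lifted_code_of_sections [FiniteDimensional F V] [FiniteDimensional F E] {ι : Type*} [Fintype ι]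
    {k : ℕ} (hk : 2 ≤ k) (C : Finset (Submodule F E)) (hCdim : ∀ U ∈ C, finrank F U = k)
    (hC : (C : Set (Submodule F E)).Pairwise fun U U' => finrank F ↥(U ⊓ U') ≤ 1)
    (σ : (U : Submodule F E) → ι → (U →ₗ[F] V)) (hσ : ∀ U i, π ∘ₗ σ U i = U.subtype)
    (hσσ : ∀ U ∈ C, ∀ i j, i ≠ j → finrank F (LinearMap.ker (σ U i - σ U j)) ≤ 1) :
    ∃ D : Finset (Submodule F V), D.card = C.card * Fintype.card ι ∧
      (∀ L ∈ D, finrank F L = k ∧ Disjoint L (LinearMap.ker π)) ∧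
      (D : Set (Submodule F V)).Pairwise fun L L' => finrank F ↥(L ⊓ L') ≤ 1 := by
  classical
  let lift : Submodule F E × ι → Submodule F V := fun p => LinearMap.range (σ p.1 p.2)
  have hmap : ∀ U i, (lift (U, i)).map π = U := fun U i => map_range_of_comp_eq_subtype (hσ U i)
  have hsame : ∀ U ∈ C, ∀ i j, i ≠ j → finrank F ↥(lift (U, i) ⊓ lift (U, j)) ≤ 1 :=
    fun U hU i j hij => (finrank_range_inf_range_le (hσ U i) (hσ U j)).trans (hσσ U hU i j hij)
  have hinj : Set.InjOn lift ↑(C ×ˢ (Finset.univ : Finset ι)) := by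
    rintro ⟨U, i⟩ hUi ⟨U', j⟩ - heq
    simp only [Finset.coe_product, Set.mem_prod, Finset.mem_coe] at hUi
    obtain rfl : U = U' := by rw [← hmap U i, ← hmap U' j, heq]
    by_contra hij
    have := hsame U hUi.1 i j (fun h => hij (by rw [h]))
    rw [heq, inf_idem, finrank_range_of_comp_eq_subtype (hσ U j), hCdim U hUi.1] at this
    omega
  refine ⟨(C ×ˢ Finset.univ).image lift, ?_, ?_, ?_⟩
  · rw [Finset.card_image_of_injOn hinj, Finset.card_product, Finset.card_univ]
  · simp only [Finset.mem_image, Finset.mem_product]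
    rintro _ ⟨⟨U, i⟩, ⟨hU, -⟩, rfl⟩
    exact ⟨(finrank_range_of_comp_eq_subtype (hσ U i)).trans (hCdim U hU),
      disjoint_range_ker_of_comp_eq_subtype (hσ U i)⟩
  · rw [Finset.coe_image, hinj.pairwise_image]
    rintro ⟨U, i⟩ hUi ⟨U', j⟩ hU'j hne
    simp only [Finset.coe_product, Set.mem_prod, Finset.mem_coe] at hUi hU'j
    by_cases hUU : U = U'
    · subst hUU
      exact hsame U hUi.1 i j (fun h => hne (by rw [h]))
    · refine (finrank_inf_le_finrank_map_inf π
        (disjoint_range_ker_of_comp_eq_subtype (hσ U i)) _).trans ?_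
      rw [hmap U i, hmap U' j]
      exact hC hUi.1 hU'j.1 hUU

theorem exists_lifted_code [Fintype F] [FiniteDimensional F V] [FiniteDimensional F E]
    (hπ : Function.Surjective π) {k n : ℕ} (hk : 2 ≤ k) (hkn : k ≤ n)
    (hn : n ≤ finrank F (LinearMap.ker π)) (C : Finset (Submodule F E))
    (hCdim : ∀ U ∈ C, finrank F U = k)
    (hC : (C : Set (Submodule F E)).Pairwise fun U U' => finrank F ↥(U ⊓ U') ≤ 1) :
    ∃ D : Finset (Submodule F V), D.card = C.card * Fintype.card F ^ (2 * n) ∧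
      (∀ L ∈ D, finrank F L = k ∧ Disjoint L (LinearMap.ker π)) ∧
      (D : Set (Submodule F V)).Pairwise fun L L' => finrank F ↥(L ⊓ L') ≤ 1 := by
  have : Fact (ringChar F).Prime := ⟨CharP.char_is_prime F _⟩
  have : NeZero n := ⟨by omega⟩
  let K := FiniteField.Extension F (ringChar F) n
  have hK : finrank F K = n := FiniteField.finrank_extension F (ringChar F) n
  have := Fintype.ofFinite K
  obtain ⟨σ, hσ, hσσ⟩ := exists_sections_finrank_ker_sub_le_one K hπ (hK.trans_le hn)
  obtain ⟨D, hDcard, hD⟩ := exists_lifted_code_of_sections hk C hCdim hC σ hσ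
    fun U hU => hσσ U (by rw [hCdim U hU, hK]; exact hkn)
  refine ⟨D, ?_, hD⟩
  rw [hDcard, Fintype.card_prod, Module.card_eq_pow_finrank (K := F) (V := K), hK, ← pow_add,
    ← two_mul]

end Lifts

section Codes

variable {F : Type*} [Field F]

lemma two_mul_sub_two_le_subspaceDist_iff {V : Type*} [AddCommGroup V] [Module F V]
    [FiniteDimensional F V] {k : ℕ} {U U' : Submodule F V} (hU : finrank F U = k)
    (hU' : finrank F U' = k) : 2 * k - 2 ≤ subspaceDist U U' ↔ finrank F ↥(U ⊓ U') ≤ 1 := by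
  have := Submodule.finrank_sup_add_finrank_inf_eq U U'
  have := Submodule.finrank_mono (inf_le_left : U ⊓ U' ≤ U)
  unfold subspaceDist
  omega

lemma isCDCode_two_mul_sub_two_iff {v k : ℕ} {C : Finset (Submodule F (Fin v → F))} :
    IsCDCode F v k (2 * k - 2) C ↔ (∀ U ∈ C, finrank F U = k) ∧
      (C : Set (Submodule F (Fin v → F))).Pairwise fun U U' => finrank F ↥(U ⊓ U') ≤ 1 := by
  refine and_congr_right fun hdim => forall₂_congr fun U hU => forall₂_congr fun U' hU' => ?_
  rw [two_mul_sub_two_le_subspaceDist_iff (hdim U hU) (hdim U' hU')]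

lemma IsCDCode.union {v k : ℕ} {D C : Finset (Submodule F (Fin v → F))}
    {W : Submodule F (Fin v → F)} (hD : IsCDCode F v k (2 * k - 2) D) (hDW : ∀ L ∈ D, Disjoint L W)
    (hC : IsCDCode F v k (2 * k - 2) C) (hCW : ∀ U ∈ C, k - 1 ≤ finrank F ↥(U ⊓ W)) :
    IsCDCode F v k (2 * k - 2) (D ∪ C) := by
  classical
  rw [isCDCode_two_mul_sub_two_iff] at hD hC ⊢
  have hcross : ∀ L ∈ D, ∀ U ∈ C, finrank F ↥(L ⊓ U) ≤ 1 := fun L hL U hU => by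
    have := finrank_inf_add_finrank_inf_le (U := U) (hDW L hL)
    have := hCW U hU
    have := hC.1 U hU
    omega
  refine ⟨fun U hU => (Finset.mem_union.mp hU).elim (hD.1 U) (hC.1 U), ?_⟩
  rw [Finset.coe_union, Set.pairwise_union]
  exact ⟨hD.2, hC.2, fun L hL U hU _ => ⟨hcross L hL U hU, inf_comm L U ▸ hcross L hL U hU⟩⟩

lemma disjoint_of_disjoint_of_le_finrank_inf {V : Type*} [AddCommGroup V] [Module F V] {k : ℕ}
    (hk : 2 ≤ k) {D C : Finset (Submodule F V)} {W : Submodule F V} (hDW : ∀ L ∈ D, Disjoint L W)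
    (hCW : ∀ U ∈ C, k - 1 ≤ finrank F ↥(U ⊓ W)) : Disjoint D C :=
  Finset.disjoint_left.mpr fun L hLD hLC => by
    have := hCW L hLC
    rw [(hDW L hLD).eq_bot, finrank_bot] at this
    omega

instance Submodule.finite_of_finite {R M : Type*} [Semiring R] [AddCommMonoid M] [Module R M]
    [Finite M] : Finite (Submodule R M) :=
  .of_injective _ SetLike.coe_injective

lemma bddAbove_of_forall_exists_card_eq {α : Type*} [Finite α] {S : Set ℕ}
    (hS : ∀ n ∈ S, ∃ C : Finset α, C.card = n) : BddAbove S := by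
  have := Fintype.ofFinite α
  exact ⟨Fintype.card α, fun n hn => (hS n hn).elim fun C hC => hC ▸ C.card_le_univ⟩

variable [Fintype F]

lemma exists_isCDCode_card_eq_Aq (v d k : ℕ) :
    ∃ C : Finset (Submodule F (Fin v → F)), C.card = Aq F v d k ∧ IsCDCode F v k d C :=
  Nat.sSup_mem (s := {n | ∃ C : Finset (Submodule F (Fin v → F)), C.card = n ∧ IsCDCode F v k d C})
    ⟨0, ∅, rfl, by simp [IsCDCode]⟩
    (bddAbove_of_forall_exists_card_eq fun _ ⟨C, hC, _⟩ => ⟨C, hC⟩)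

lemma card_le_Aq {v d k : ℕ} {C : Finset (Submodule F (Fin v → F))} (hC : IsCDCode F v k d C) :
    C.card ≤ Aq F v d k :=
  le_csSup (bddAbove_of_forall_exists_card_eq fun _ ⟨C, hC, _⟩ => ⟨C, hC⟩) ⟨C, rfl, hC⟩

lemma exists_card_eq_Bq {v₁ v₂ : ℕ} (d k : ℕ) (h : v₂ ≤ v₁) :
    ∃ (C : Finset (Submodule F (Fin v₁ → F))) (W : Submodule F (Fin v₁ → F)),
      C.card = Bq F v₁ v₂ d k ∧ IsCDCode F v₁ k d C ∧ finrank F W = v₂ ∧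
      ∀ U ∈ C, d / 2 ≤ finrank F ↥(U ⊓ W) := by
  obtain ⟨ι, hι⟩ := finrank_le_iff_exists_linearMap.mp
    (show finrank F (Fin v₂ → F) ≤ finrank F (Fin v₁ → F) by simpa using h)
  exact Nat.sSup_mem (s := {n | ∃ (C : Finset (Submodule F (Fin v₁ → F)))
      (W : Submodule F (Fin v₁ → F)), C.card = n ∧ IsCDCode F v₁ k d C ∧ finrank F W = v₂ ∧
      ∀ U ∈ C, d / 2 ≤ finrank F ↥(U ⊓ W)}) ⟨0, ∅, LinearMap.range ι, rfl, by simp [IsCDCode],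
      by simp [LinearMap.finrank_range_of_inj hι], by simp⟩
    (bddAbove_of_forall_exists_card_eq fun _ ⟨C, _, hC, _⟩ => ⟨C, hC⟩)

end Codes

/-- assuming Conjecture 1 of the paper, the generalized linkage bound
`A_q(v,2k-2;k) ≥ A_q(m,2k-2;k) * q^{2(v-m)} + A_q(v-m,2k-4;k-1)` (Theorem A.1). -/
theorem stmt_17 (q : ℕ) (F : Type) [Field F] [Fintype F] (hq : Fintype.card F = q)
    (hconj : ∀ k v1 v2 : ℕ, 3 ≤ k → k + 1 ≤ v2 + 2 → v2 + 2 ≤ v1 →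
      Bq F v1 v2 (2 * k - 2) k = Aq F v2 (2 * k - 4) (k - 1))
    (v m k : ℕ) (hk : 3 ≤ k) (hkm : k ≤ m) (hmv : m + k ≤ v) :
    Aq F m (2 * k - 2) k * q ^ (2 * (v - m)) + Aq F (v - m) (2 * k - 4) (k - 1) ≤
      Aq F v (2 * k - 2) k := by
  classical
  subst hq
  set n := v - m
  obtain ⟨C₁, hC₁card, hC₁⟩ := exists_isCDCode_card_eq_Aq (F := F) m (2 * k - 2) k
  obtain ⟨C₂, W, hC₂card, hC₂, hW, hC₂W⟩ :=
    exists_card_eq_Bq (F := F) (2 * k - 2) k (show n ≤ v by omega)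
  rw [hconj k v n hk (by omega) (by omega)] at hC₂card
  replace hC₂W : ∀ U ∈ C₂, k - 1 ≤ finrank F ↥(U ⊓ W) := fun U hU => by
    have := hC₂W U hU; omega
  obtain ⟨π, hπ, rfl⟩ := exists_surjective_ker_eq (E := Fin m → F) W
    (by rw [hW, finrank_fin_fun, finrank_fin_fun]; omega)
  rw [isCDCode_two_mul_sub_two_iff] at hC₁
  obtain ⟨D, hDcard, hD, hDpair⟩ :=
    exists_lifted_code hπ (by omega) (show k ≤ n by omega) hW.ge C₁ hC₁.1 hC₁.2
  have hDcode : IsCDCode F v k (2 * k - 2) D :=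
    isCDCode_two_mul_sub_two_iff.mpr ⟨fun L hL => (hD L hL).1, hDpair⟩
  calc _ = (D ∪ C₂).card := by
        rw [Finset.card_union_of_disjoint (disjoint_of_disjoint_of_le_finrank_inf (by omega)
          (fun L hL => (hD L hL).2) hC₂W), hDcard, hC₁card, hC₂card]
    _ ≤ _ := card_le_Aq (hDcode.union (fun L hL => (hD L hL).2) hC₂ hC₂W)
end
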